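/- Consider the 3-dimensional lattice Kuramoto model with coupling range r = √2 (adjacency exactly when the toroidal squared distance is 1 or 2) and the (q1,q2,q3)-twisted state. If 4·max{|q1|+|q2|, |q2|+|q3|, |q1|+|q3|} < L, then the Jacobian matrix J at the twisted state is negative semidefinite and its kernel is one-dimensional, spanned by the all-ones vector (the twisted state is asymptotically stable). -/

import Mathlib

noncomputable section
open Real Finset Matrix

/-- Toroidal squared distance on the `m`-dimensional lattice `(ZMod L)ᵐ`:
`d(x,y) = Σ_j min(|x_j−y_j|, L−|x_j−y_j|)²` with representatives in `{0,…,L−1}`. -/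
def torDistM (L m : ℕ) (x y : Fin m → ZMod L) : ℕ :=
  ∑ j, (min (((x j).val : ℤ) - ((y j).val : ℤ)).natAbs
      (L - (((x j).val : ℤ) - ((y j).val : ℤ)).natAbs)) ^ 2

/-- Adjacency with real coupling range `r`: `A(x,y) = 1` iff `0 < d(x,y) ≤ r²`, else `0`. -/
def adjRM (L m : ℕ) (r : ℝ) (x y : Fin m → ZMod L) : ℝ :=
  if 0 < torDistM L m x y ∧ (torDistM L m x y : ℝ) ≤ r ^ 2 then 1 else 0

/-- Adjacency with integer squared coupling range `r2`:
`A(x,y) = 1` iff `0 < d(x,y) ≤ r2`, else `0`. -/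
def adjNM (L m r2 : ℕ) (x y : Fin m → ZMod L) : ℝ :=
  if 0 < torDistM L m x y ∧ torDistM L m x y ≤ r2 then 1 else 0

/-- The `(q1,…,qm)`-twisted state `θ_x = Σ_j 2π q_j x_j / L + C`. -/
def twistedM (L m : ℕ) (q : Fin m → ℤ) (C : ℝ) (x : Fin m → ZMod L) : ℝ :=
  (∑ j, 2 * π * q j * (x j).val / L) + C

/-- Jacobian of the `m`-dimensional lattice Kuramoto model (real range `r`) at configuration `u`. -/
def jacRM (L m : ℕ) [NeZero L] (r : ℝ) (u : (Fin m → ZMod L) → ℝ) :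
    Matrix (Fin m → ZMod L) (Fin m → ZMod L) ℝ :=
  fun x y =>
    if x = y then -∑ z, adjRM L m r x z * Real.cos (u z - u x)
    else adjRM L m r x y * Real.cos (u y - u x)

/-- Jacobian of the `m`-dimensional lattice Kuramoto model (integer squared range `r2`) at
configuration `u`. -/
def jacNM (L m : ℕ) [NeZero L] (r2 : ℕ) (u : (Fin m → ZMod L) → ℝ) :
    Matrix (Fin m → ZMod L) (Fin m → ZMod L) ℝ :=
  fun x y =>
    if x = y then -∑ z, adjNM L m r2 x z * Real.cos (u z - u x)
    else adjNM L m r2 x y * Real.cos (u y - u x)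

/-!
The Jacobian at the twisted state is minus the Laplacian of the torus graph with edge weights
`c x y = A x y * cos (θ y - θ x)`, so `vᵀ J v = -½ ∑ c x y (v x - v y)²`. For neighbours
(squared distance `1` or `2`) the phase difference is `2π (q ⬝ ε) / L` modulo `2π`, where
`ε ∈ {-1, 0, 1}³` has at most two nonzero entries; hence `4 |q ⬝ ε| < L` and the cosine is
positive. So all weights are nonnegative, which gives semidefiniteness, and the weights of unit
steps are positive, so a kernel vector is constant along unit steps and therefore constant.
-/

namespace Matrix

variable {ι : Type*} [Fintype ι] [DecidableEq ι]

def weightedLaplacian (c : Matrix ι ι ℝ) : Matrix ι ι ℝ :=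
  diagonal (fun i => ∑ j, c i j) - c

theorem weightedLaplacian_mulVec_const (c : Matrix ι ι ℝ) (a : ℝ) :
    weightedLaplacian c *ᵥ Function.const ι a = 0 := by
  ext i
  rw [weightedLaplacian, sub_mulVec, Pi.sub_apply, mulVec_diagonal]
  simp [mulVec, dotProduct, Finset.sum_mul]

theorem dotProduct_weightedLaplacian_mulVec {c : Matrix ι ι ℝ} (hc : c.IsSymm) (x : ι → ℝ) :
    x ⬝ᵥ weightedLaplacian c *ᵥ x = (∑ i, ∑ j, c i j * (x i - x j) ^ 2) / 2 := by
  have hswap : ∑ i, ∑ j, c i j * x j ^ 2 = ∑ i, ∑ j, c i j * x i ^ 2 := by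
    rw [Finset.sum_comm]
    exact Finset.sum_congr rfl fun i _ => Finset.sum_congr rfl fun j _ => by
      rw [← hc.apply i j]
  have hexpand : ∑ i, ∑ j, c i j * (x i - x j) ^ 2 =
      ∑ i, ∑ j, c i j * x i ^ 2 - 2 * ∑ i, ∑ j, c i j * x i * x j +
        ∑ i, ∑ j, c i j * x j ^ 2 := by
    simp only [Finset.mul_sum, ← Finset.sum_sub_distrib, ← Finset.sum_add_distrib]
    exact Finset.sum_congr rfl fun i _ => Finset.sum_congr rfl fun j _ => by ring
  have hform : x ⬝ᵥ weightedLaplacian c *ᵥ x =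
      ∑ i, ∑ j, c i j * x i ^ 2 - ∑ i, ∑ j, c i j * x i * x j := by
    rw [weightedLaplacian, sub_mulVec, dotProduct_sub]
    simp only [dotProduct, mulVec_diagonal]
    simp only [mulVec, dotProduct, Finset.mul_sum, Finset.sum_mul]
    congr 1 <;> exact Finset.sum_congr rfl fun i _ => Finset.sum_congr rfl fun j _ => by ring
  rw [hform, hexpand, hswap]
  ring

theorem dotProduct_weightedLaplacian_mulVec_nonneg {c : Matrix ι ι ℝ} (hc : c.IsSymm)
    (hc₀ : ∀ i j, 0 ≤ c i j) (x : ι → ℝ) : 0 ≤ x ⬝ᵥ weightedLaplacian c *ᵥ x := by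
  rw [dotProduct_weightedLaplacian_mulVec hc]
  exact div_nonneg (Finset.sum_nonneg fun i _ => Finset.sum_nonneg fun j _ =>
    mul_nonneg (hc₀ i j) (sq_nonneg _)) zero_le_two

theorem eq_of_weightedLaplacian_mulVec_eq_zero {c : Matrix ι ι ℝ} (hc : c.IsSymm)
    (hc₀ : ∀ i j, 0 ≤ c i j) {y : ι → ℝ} (hy : weightedLaplacian c *ᵥ y = 0) {i j : ι}
    (hij : 0 < c i j) : y i = y j := by
  have hterm : ∀ i j, 0 ≤ c i j * (y i - y j) ^ 2 := fun i j => mul_nonneg (hc₀ i j) (sq_nonneg _)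
  have hsum : ∑ i, ∑ j, c i j * (y i - y j) ^ 2 = 0 := by
    have := dotProduct_weightedLaplacian_mulVec hc y
    rw [hy, dotProduct_zero] at this
    linarith
  have hzero := (Finset.sum_eq_zero_iff_of_nonneg fun j _ => hterm i j).mp
    ((Finset.sum_eq_zero_iff_of_nonneg fun i _ => Finset.sum_nonneg fun j _ => hterm i j).mp
      hsum i (Finset.mem_univ i)) j (Finset.mem_univ j)
  have hsq := (mul_eq_zero.mp hzero).resolve_left hij.ne'
  exact sub_eq_zero.mp (pow_eq_zero_iff two_ne_zero |>.mp hsq)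

end Matrix

def cycDist (L : ℕ) (a b : ZMod L) : ℕ :=
  min ((a.val : ℤ) - (b.val : ℤ)).natAbs (L - ((a.val : ℤ) - (b.val : ℤ)).natAbs)

section CycDist

variable {L : ℕ}

theorem cycDist_comm (a b : ZMod L) : cycDist L a b = cycDist L b a := by
  unfold cycDist
  rw [← Int.natAbs_neg, neg_sub]

theorem cycDist_self (a : ZMod L) : cycDist L a a = 0 := by
  simp [cycDist]

theorem cycDist_add_one (hL : 1 < L) (a : ZMod L) : cycDist L a (a + 1) = 1 := by
  have : Fact (1 < L) := ⟨hL⟩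
  have ha := ZMod.val_lt a
  rw [cycDist, ZMod.val_add, ZMod.val_one]
  rcases Nat.lt_or_ge (a.val + 1) L with h | h
  · rw [Nat.mod_eq_of_lt h]
    omega
  · rw [show a.val + 1 = L by omega, Nat.mod_self]
    omega

theorem exists_val_sub_val_eq_add_mul [NeZero L] (a b : ZMod L) :
    ∃ ε t : ℤ, ε.natAbs = cycDist L a b ∧ (a.val : ℤ) - b.val = ε + L * t := by
  have ha := ZMod.val_lt a
  have hb := ZMod.val_lt b
  unfold cycDist
  set d : ℤ := (a.val : ℤ) - b.val
  by_cases hc : 2 * d.natAbs ≤ L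
  · exact ⟨d, 0, by omega, by ring⟩
  · rcases le_or_gt 0 d with h0 | h0
    · exact ⟨d - L, 1, by omega, by ring⟩
    · exact ⟨d + L, -1, by omega, by ring⟩

end CycDist

section TorDist

variable {L m : ℕ}

theorem torDistM_eq_sum_cycDist (x y : Fin m → ZMod L) :
    torDistM L m x y = ∑ j, cycDist L (x j) (y j) ^ 2 := rfl

theorem torDistM_comm (x y : Fin m → ZMod L) : torDistM L m x y = torDistM L m y x := by
  simp only [torDistM_eq_sum_cycDist, cycDist_comm (x _)]

theorem torDistM_self (x : Fin m → ZMod L) : torDistM L m x x = 0 := by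
  simp [torDistM_eq_sum_cycDist, cycDist_self]

theorem torDistM_add_single_one (hL : 1 < L) (p : Fin m → ZMod L) (j : Fin m) :
    torDistM L m p (p + Pi.single j 1) = 1 := by
  rw [torDistM_eq_sum_cycDist, Finset.sum_eq_single j]
  · simp [cycDist_add_one hL]
  · intro i _ hij
    simp [hij, cycDist_self]
  · simp

end TorDist

theorem eq_of_forall_add_single_one {ι α : Type*} [Fintype ι] [DecidableEq ι] {L : ℕ} [NeZero L]
    {f : (ι → ZMod L) → α} (hf : ∀ p j, f (p + Pi.single j 1) = f p) (p q : ι → ZMod L) :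
    f p = f q := by
  let S : AddSubmonoid (ι → ZMod L) :=
    { carrier := {v | ∀ p, f (p + v) = f p}
      add_mem' := fun {v w} hv hw p => by simp only [← add_assoc, hw (p + v), hv p]
      zero_mem' := fun p => by simp only [add_zero] }
  have hS : ∀ v, v ∈ S := by
    intro v
    rw [pi_eq_sum_univ' v]
    refine AddSubmonoid.sum_mem S fun j _ => ?_
    rw [← ZMod.natCast_zmod_val (v j), Nat.cast_smul_eq_nsmul]
    exact AddSubmonoid.nsmul_mem S (hf · j) _
  simpa using (hS (q - p) p).symm

section TwistedState

variable {L m : ℕ} [NeZero L]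

theorem exists_cos_twistedM_sub_eq (q : Fin m → ℤ) (C : ℝ) (x z : Fin m → ZMod L) :
    ∃ ε : Fin m → ℤ, (∀ j, (ε j).natAbs = cycDist L (z j) (x j)) ∧
      cos (twistedM L m q C z - twistedM L m q C x) =
        cos (2 * π * ((∑ j, q j * ε j : ℤ) : ℝ) / L) := by
  choose ε t hε ht using fun j => exists_val_sub_val_eq_add_mul (z j) (x j)
  refine ⟨ε, hε, ?_⟩
  have hL : (L : ℝ) ≠ 0 := Nat.cast_ne_zero.mpr (NeZero.ne L)
  have ht' : ∀ j, ((z j).val : ℝ) - (x j).val = ε j + L * t j := fun j => by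
    exact_mod_cast ht j
  have hphase : twistedM L m q C z - twistedM L m q C x =
      2 * π * ((∑ j, q j * ε j : ℤ) : ℝ) / L + ((∑ j, q j * t j : ℤ) : ℝ) * (2 * π) := by
    simp only [twistedM, add_sub_add_right_eq_sub, ← Finset.sum_sub_distrib]
    push_cast
    rw [Finset.mul_sum, Finset.sum_div, Finset.sum_mul, ← Finset.sum_add_distrib]
    refine Finset.sum_congr rfl fun j _ => ?_
    field_simp
    linear_combination (q j : ℝ) * ht' j
  rw [hphase, Real.cos_add_int_mul_two_pi]

end TwistedState

theorem cos_two_pi_mul_div_pos {L : ℕ} {s : ℤ} (hs : 4 * |s| < L) :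
    0 < cos (2 * π * s / L) := by
  have hL : (0 : ℝ) < L := by
    have := abs_nonneg s
    exact_mod_cast (show (0 : ℤ) < L by omega)
  have hs' : 4 * |(s : ℝ)| < L := by exact_mod_cast hs
  have hbound : |2 * π * (s : ℝ) / L| < π / 2 := by
    rw [abs_div, abs_of_pos hL, abs_mul, abs_of_pos (by positivity : (0 : ℝ) < 2 * π),
      div_lt_iff₀ hL]
    nlinarith [pi_pos]
  exact cos_pos_of_mem_Ioo ⟨by linarith [neg_abs_le (2 * π * (s : ℝ) / L)],
    by linarith [le_abs_self (2 * π * (s : ℝ) / L)]⟩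

theorem abs_add_three_mul_le_max (q₁ q₂ q₃ e₁ e₂ e₃ : ℤ)
    (he : e₁.natAbs ^ 2 + e₂.natAbs ^ 2 + e₃.natAbs ^ 2 ≤ 2) :
    |q₁ * e₁ + q₂ * e₂ + q₃ * e₃| ≤ max (|q₁| + |q₂|) (max (|q₂| + |q₃|) (|q₁| + |q₃|)) := by
  have h₁ : e₁.natAbs ≤ 1 := by nlinarith
  have h₂ : e₂.natAbs ≤ 1 := by nlinarith
  have h₃ : e₃.natAbs ≤ 1 := by nlinarith
  calc |q₁ * e₁ + q₂ * e₂ + q₃ * e₃|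
      ≤ |q₁| * e₁.natAbs + |q₂| * e₂.natAbs + |q₃| * e₃.natAbs := by
        simpa only [abs_mul, Int.abs_eq_natAbs] using abs_add_three (q₁ * e₁) (q₂ * e₂) (q₃ * e₃)
    _ ≤ max (|q₁| + |q₂|) (max (|q₂| + |q₃|) (|q₁| + |q₃|)) := by
        have := abs_nonneg q₁; have := abs_nonneg q₂; have := abs_nonneg q₃
        interval_cases e₁.natAbs <;> interval_cases e₂.natAbs <;> interval_cases e₃.natAbs <;>
          omega

theorem cos_twistedM_sub_pos {L : ℕ} [NeZero L] {q₁ q₂ q₃ : ℤ} (C : ℝ)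
    (h : 4 * max (|q₁| + |q₂|) (max (|q₂| + |q₃|) (|q₁| + |q₃|)) < (L : ℤ))
    {x z : Fin 3 → ZMod L} (hd : torDistM L 3 x z ≤ 2) :
    0 < cos (twistedM L 3 ![q₁, q₂, q₃] C z - twistedM L 3 ![q₁, q₂, q₃] C x) := by
  obtain ⟨ε, hε, hcos⟩ := exists_cos_twistedM_sub_eq ![q₁, q₂, q₃] C x z
  have hε₂ : (ε 0).natAbs ^ 2 + (ε 1).natAbs ^ 2 + (ε 2).natAbs ^ 2 ≤ 2 := by
    rw [torDistM_comm, torDistM_eq_sum_cycDist, Fin.sum_univ_three] at hd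
    simpa only [hε] using hd
  have hs := abs_add_three_mul_le_max q₁ q₂ q₃ _ _ _ hε₂
  rw [hcos]
  apply cos_two_pi_mul_div_pos
  simp only [Fin.sum_univ_three, Matrix.cons_val]
  omega

section KuramotoWeight

variable {L m : ℕ}

def kuramotoWeight (L m r2 : ℕ) (u : (Fin m → ZMod L) → ℝ) :
    Matrix (Fin m → ZMod L) (Fin m → ZMod L) ℝ :=
  fun x y => adjNM L m r2 x y * cos (u y - u x)

theorem adjNM_self (r2 : ℕ) (x : Fin m → ZMod L) : adjNM L m r2 x x = 0 := by
  simp [adjNM, torDistM_self]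

theorem jacNM_eq_neg_weightedLaplacian [NeZero L] (r2 : ℕ) (u : (Fin m → ZMod L) → ℝ) :
    jacNM L m r2 u = -(kuramotoWeight L m r2 u).weightedLaplacian := by
  ext x y
  by_cases hxy : x = y
  · subst hxy
    simp [jacNM, weightedLaplacian, kuramotoWeight, adjNM_self]
  · simp [jacNM, weightedLaplacian, kuramotoWeight, hxy]

theorem kuramotoWeight_isSymm (r2 : ℕ) (u : (Fin m → ZMod L) → ℝ) :
    (kuramotoWeight L m r2 u).IsSymm :=
  IsSymm.ext fun x y => by
    simp only [kuramotoWeight, adjNM, torDistM_comm y x, ← cos_neg (u x - u y), neg_sub]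

variable [NeZero L] {q₁ q₂ q₃ : ℤ} (C : ℝ)
  (h : 4 * max (|q₁| + |q₂|) (max (|q₂| + |q₃|) (|q₁| + |q₃|)) < (L : ℤ))
include h

theorem kuramotoWeight_twistedM_nonneg (x y : Fin 3 → ZMod L) :
    0 ≤ kuramotoWeight L 3 2 (twistedM L 3 ![q₁, q₂, q₃] C) x y := by
  unfold kuramotoWeight adjNM
  split_ifs with hxy
  · exact mul_nonneg zero_le_one (cos_twistedM_sub_pos C h hxy.2).le
  · rw [zero_mul]

theorem kuramotoWeight_twistedM_add_single_pos (hL : 1 < L) (p : Fin 3 → ZMod L) (j : Fin 3) :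
    0 < kuramotoWeight L 3 2 (twistedM L 3 ![q₁, q₂, q₃] C) p (p + Pi.single j 1) := by
  have hd := torDistM_add_single_one hL p j
  rw [kuramotoWeight, adjNM, if_pos (by omega), one_mul]
  exact cos_twistedM_sub_pos C h (by omega)

end KuramotoWeight

/-- 3D lattice with coupling range `r = √2` (toroidal squared distance `1` or `2`): if
`4 max{|q1|+|q2|, |q2|+|q3|, |q1|+|q3|} < L` then the Jacobian at the `(q1,q2,q3)`-twisted state
is negative semidefinite and its kernel is one-dimensional, spanned by the all-ones vector
(asymptotic stability). -/
theorem three_dim_diagonal_coupling_stable (L : ℕ) [NeZero L] (q1 q2 q3 : ℤ) (C : ℝ)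
    (h : 4 * max (|q1| + |q2|) (max (|q2| + |q3|) (|q1| + |q3|)) < (L : ℤ)) :
    (∀ x : (Fin 3 → ZMod L) → ℝ,
      x ⬝ᵥ (jacNM L 3 2 (twistedM L 3 ![q1, q2, q3] C)).mulVec x ≤ 0) ∧
    (jacNM L 3 2 (twistedM L 3 ![q1, q2, q3] C)).mulVec (Function.const _ 1) = 0 ∧
    (∀ y : (Fin 3 → ZMod L) → ℝ,
      (jacNM L 3 2 (twistedM L 3 ![q1, q2, q3] C)).mulVec y = 0 →
        ∃ c : ℝ, y = Function.const _ c) := by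
  set c := kuramotoWeight L 3 2 (twistedM L 3 ![q1, q2, q3] C)
  have hsymm : c.IsSymm := kuramotoWeight_isSymm 2 _
  have hnonneg : ∀ x y, 0 ≤ c x y := kuramotoWeight_twistedM_nonneg C h
  simp only [jacNM_eq_neg_weightedLaplacian, neg_mulVec, dotProduct_neg, neg_nonpos,
    neg_eq_zero]
  refine ⟨dotProduct_weightedLaplacian_mulVec_nonneg hsymm hnonneg,
    weightedLaplacian_mulVec_const c 1, fun y hy => ⟨y 0, funext fun p => ?_⟩⟩
  refine eq_of_forall_add_single_one (fun p j => ?_) p 0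
  rcases (Nat.one_le_iff_ne_zero.mpr (NeZero.ne L)).eq_or_lt with hL | hL
  · subst hL
    exact congrArg y (Subsingleton.elim _ _)
  · exact (eq_of_weightedLaplacian_mulVec_eq_zero hsymm hnonneg hy
      (kuramotoWeight_twistedM_add_single_pos C h hL p j)).symm
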